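/- For any x, y in the open unit ball of a complex Hilbert space, (1/2)‖x − y‖ ≤ ρ_E(x, y), where ρ_E is the pseudo-hyperbolic metric. -/

import Mathlib

open scoped ComplexInnerProductSpace

/-- The pseudo-hyperbolic metric on the unit ball of a complex Hilbert space, via
`ρ_E(x,y)² = 1 - (1-‖x‖²)(1-‖y‖²)/|1-⟨x,y⟩|²`.  (The paper's inner product `⟨x,y⟩`
is linear in the first variable, i.e. it is Mathlib's `⟪y, x⟫`.) -/
noncomputable def rhoE {E : Type*} [NormedAddCommGroup E] [InnerProductSpace ℂ E]
    (x y : E) : ℝ :=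
  Real.sqrt (1 - (1 - ‖x‖ ^ 2) * (1 - ‖y‖ ^ 2) / ‖1 - ⟪y, x⟫‖ ^ 2)

/-! With `p = ‖x‖`, `q = ‖y‖` and `⟪y, x⟫ = r + m i`, we have `‖x - y‖² = p² + q² - 2r` and
`|1 - ⟪y, x⟫|² = (1 - r)² + m²`, while Cauchy–Schwarz gives `r² + m² ≤ p²q²`. The claim
`‖x - y‖² |1 - ⟪y, x⟫|² ≤ 4 ρ² |1 - ⟪y, x⟫|²` is then a polynomial inequality: the difference of
its sides is `m² (4 - ‖x - y‖²) + (p² + q² - 2r)(3 + 2r - r²) - 4(p²q² - r²)`, and by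
`p² + q² ≥ 2pq` the last two terms are at least `2 (pq - r)(3 - r² - 2pq) ≥ 0`. -/

theorem sq_add_sq_sub_two_mul_mul_le {p q r m : ℝ} (hp₀ : 0 ≤ p) (hq₀ : 0 ≤ q) (hp : p < 1)
    (hq : q < 1) (hrm : r ^ 2 + m ^ 2 ≤ (p * q) ^ 2) :
    (p ^ 2 + q ^ 2 - 2 * r) * ((1 - r) ^ 2 + m ^ 2) ≤
      4 * ((1 - r) ^ 2 + m ^ 2 - (1 - p ^ 2) * (1 - q ^ 2)) := by
  have hpq : p * q < 1 := mul_lt_one_of_nonneg_of_lt_one_left hp₀ hp hq.le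
  obtain ⟨hr₁, hr₂⟩ := abs_le_of_sq_le_sq' (a := r) (by nlinarith) (mul_nonneg hp₀ hq₀)
  have hr_sq : r ^ 2 < 1 := by nlinarith
  have hdist : 0 ≤ 4 - (p ^ 2 + q ^ 2 - 2 * r) := by nlinarith
  have hfactor : 0 ≤ (p * q - r) * (3 - r ^ 2 - 2 * (p * q)) :=
    mul_nonneg (by linarith) (by linarith)
  nlinarith [mul_nonneg (sq_nonneg m) hdist,
    mul_nonneg (sq_nonneg (p - q)) (by nlinarith : (0 : ℝ) ≤ 3 + 2 * r - r ^ 2)]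

section InnerProductSpace

variable {E : Type*} [NormedAddCommGroup E] [InnerProductSpace ℂ E]

theorem norm_sub_sq_eq_sub_two_re_inner (x y : E) :
    ‖x - y‖ ^ 2 = ‖x‖ ^ 2 + ‖y‖ ^ 2 - 2 * (⟪y, x⟫).re := by
  rw [norm_sub_sq (𝕜 := ℂ), inner_re_symm, RCLike.re_to_complex]
  ring

theorem norm_sub_sq_mul_le_four_mul {x y : E} (hx : ‖x‖ < 1) (hy : ‖y‖ < 1) :
    ‖x - y‖ ^ 2 * ‖1 - ⟪y, x⟫‖ ^ 2 ≤
      4 * (‖1 - ⟪y, x⟫‖ ^ 2 - (1 - ‖x‖ ^ 2) * (1 - ‖y‖ ^ 2)) := by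
  have hcs : ‖⟪y, x⟫‖ ^ 2 ≤ (‖x‖ * ‖y‖) ^ 2 := by
    rw [mul_comm]
    exact pow_le_pow_left₀ (norm_nonneg _) (norm_inner_le_norm y x) 2
  rw [Complex.sq_norm, Complex.normSq_apply] at hcs
  rw [norm_sub_sq_eq_sub_two_re_inner, Complex.sq_norm, Complex.normSq_apply]
  simp only [Complex.sub_re, Complex.one_re, Complex.sub_im, Complex.one_im]
  have := sq_add_sq_sub_two_mul_mul_le (r := (⟪y, x⟫).re) (m := (⟪y, x⟫).im) (norm_nonneg x)
    (norm_nonneg y) hx hy (by linear_combination hcs)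
  linear_combination this

theorem norm_one_sub_inner_pos {x y : E} (hx : ‖x‖ < 1) (hy : ‖y‖ < 1) :
    0 < ‖1 - ⟪y, x⟫‖ := by
  have hinner : ‖⟪y, x⟫‖ < 1 :=
    (norm_inner_le_norm y x).trans_lt (mul_lt_one_of_nonneg_of_lt_one_left (norm_nonneg y) hy hx.le)
  calc 0 < 1 - ‖⟪y, x⟫‖ := sub_pos.mpr hinner
    _ = ‖(1 : ℂ)‖ - ‖⟪y, x⟫‖ := by rw [norm_one]
    _ ≤ ‖1 - ⟪y, x⟫‖ := norm_sub_norm_le _ _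

end InnerProductSpace

/-- `(1/2)‖x - y‖ ≤ ρ_E(x,y)` for `x, y` in the open unit ball. -/
theorem half_norm_sub_le_rhoE {E : Type*} [NormedAddCommGroup E] [InnerProductSpace ℂ E]
    (x y : E) (hx : ‖x‖ < 1) (hy : ‖y‖ < 1) :
    (1 / 2) * ‖x - y‖ ≤ rhoE x y := by
  have hD : 0 < ‖1 - ⟪y, x⟫‖ ^ 2 := pow_pos (norm_one_sub_inner_pos hx hy) 2
  have hkey := norm_sub_sq_mul_le_four_mul hx hy
  apply Real.le_sqrt_of_sq_le
  rw [le_sub_comm, div_le_iff₀ hD]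
  nlinarith
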